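/- Let τ ∈ [0,1) and y > 0. Then (1/(2y)) ∫₀^∞ δ · √(δ² + 4y²) · exp(−δ²/(2(1−τ²))) dδ = (1−τ²) + √(π/2) · (1−τ²)^{3/2} · exp(2y²/(1−τ²)) · (1/(2y)) · erfc(√(2/(1−τ²)) · y), where the integral is with respect to Lebesgue measure on (0,∞). -/

import Mathlib

/-
Substituting `w = √(δ² + a²)` (here `a = 2y`, `s = 1 - τ²`) turns `δ w e^{-δ²/(2s)} dδ`
into `e^{a²/(2s)} w² e^{-w²/(2s)} dw`, and integrating `w · (w e^{-w²/(2s)})` by parts gives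
the primitive `-s w e^{-w²/(2s)} - s √(πs/2) erfc(w/√(2s))` of `w² e^{-w²/(2s)}`, which
vanishes at `+∞`. Hence `e^{a²/(2s)}` times this primitive at `√(δ² + a²)` is a primitive of
the integrand that vanishes at infinity, and the integral is minus its value at `δ = 0`.
-/

open MeasureTheory

/-- The complementary error function `erfc(x) = (2/√π) ∫_x^∞ e^{−t²} dt`. -/
noncomputable def erfc (x : ℝ) : ℝ :=
  2 / Real.sqrt Real.pi * ∫ t in Set.Ioi x, Real.exp (-t ^ 2)

open Set Filter Topology Real

section TailIntegral

variable {E : Type*} [NormedAddCommGroup E] [NormedSpace ℝ E] {f : ℝ → E}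

theorem integral_Ioi_eq_sub_intervalIntegral (hf : Integrable f) (a x : ℝ) :
    ∫ t in Ioi x, f t = (∫ t in Ioi a, f t) - ∫ t in a..x, f t := by
  rw [← intervalIntegral.integral_Ioi_sub_Ioi' hf.integrableOn hf.integrableOn, sub_sub_cancel]

theorem hasDerivAt_integral_Ioi [CompleteSpace E] (hf : Integrable f) (hf' : Continuous f)
    (x : ℝ) :
    HasDerivAt (fun x ↦ ∫ t in Ioi x, f t) (-f x) x := by
  rw [funext (integral_Ioi_eq_sub_intervalIntegral hf 0)]
  exact (intervalIntegral.integral_hasDerivAt_right hf.intervalIntegrable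
    hf'.aestronglyMeasurable.stronglyMeasurableAtFilter hf'.continuousAt).const_sub _

theorem tendsto_integral_Ioi_atTop [CompleteSpace E] (hf : Integrable f) :
    Tendsto (fun x ↦ ∫ t in Ioi x, f t) atTop (𝓝 0) := by
  rw [funext (integral_Ioi_eq_sub_intervalIntegral hf 0)]
  simpa using (intervalIntegral_tendsto_integral_Ioi 0 hf.integrableOn tendsto_id).const_sub
    (∫ t in Ioi 0, f t)

end TailIntegral

theorem integrable_exp_neg_sq : Integrable fun t : ℝ ↦ exp (-t ^ 2) := by
  simpa using integrable_exp_neg_mul_sq one_pos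

theorem hasDerivAt_erfc (x : ℝ) : HasDerivAt erfc (-(2 / √π * exp (-x ^ 2))) x :=
  ((hasDerivAt_integral_Ioi integrable_exp_neg_sq (by fun_prop) x).const_mul
    (2 / √π)).congr_deriv (mul_neg _ _)

theorem tendsto_erfc_atTop : Tendsto erfc atTop (𝓝 0) := by
  unfold erfc
  simpa using (tendsto_integral_Ioi_atTop integrable_exp_neg_sq).const_mul (2 / √π)

theorem tendsto_mul_exp_neg_sq_div_atTop {s : ℝ} (hs : 0 < s) :
    Tendsto (fun u ↦ u * exp (-u ^ 2 / (2 * s))) atTop (𝓝 0) := by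
  have h := tendsto_rpow_abs_mul_exp_neg_mul_sq_cocompact (by positivity : 0 < 1 / (2 * s)) 1
  refine (h.mono_left atTop_le_cocompact).congr' ?_
  filter_upwards [eventually_ge_atTop 0] with u hu
  rw [Real.rpow_one, abs_of_nonneg hu]
  congr 2
  ring

noncomputable def sqGaussPrimitive (s u : ℝ) : ℝ :=
  -(s * u * exp (-u ^ 2 / (2 * s))) - s * √(π * s / 2) * erfc (u / √(2 * s))

variable {s : ℝ}

theorem hasDerivAt_sqGaussPrimitive (hs : 0 < s) (u : ℝ) :
    HasDerivAt (sqGaussPrimitive s) (u ^ 2 * exp (-u ^ 2 / (2 * s))) u := by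
  have hexp : HasDerivAt (fun u ↦ exp (-u ^ 2 / (2 * s)))
      (exp (-u ^ 2 / (2 * s)) * (-u / s)) u := by
    refine HasDerivAt.exp <| (((hasDerivAt_pow 2 u).fun_neg).div_const (2 * s)).congr_deriv ?_
    field_simp
    norm_num
  have herfc := (hasDerivAt_erfc (u / √(2 * s))).comp u ((hasDerivAt_id u).div_const √(2 * s))
  have hsq : (u / √(2 * s)) ^ 2 = u ^ 2 / (2 * s) := by
    rw [div_pow, sq_sqrt (by positivity)]
  rw [hsq, ← neg_div] at herfc
  refine ((((hasDerivAt_id u).const_mul s).mul hexp).fun_neg.fun_sub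
    (herfc.const_mul (s * √(π * s / 2)))).congr_deriv ?_
  have hK : √(π * s / 2) = √π * √(2 * s) / 2 := by
    rw [← sqrt_mul pi_pos.le, show π * (2 * s) = π * s / 2 * 2 ^ 2 by ring,
      sqrt_mul (by positivity), sqrt_sq zero_le_two, mul_div_cancel_right₀ _ two_ne_zero]
  have h2s : 0 < √(2 * s) := by positivity
  have hπ : 0 < √π := by positivity
  rw [hK, id]
  field_simp
  ring

theorem tendsto_sqGaussPrimitive_atTop (hs : 0 < s) :
    Tendsto (sqGaussPrimitive s) atTop (𝓝 0) := by
  have herfc := tendsto_erfc_atTop.comp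
    (tendsto_id.atTop_div_const (sqrt_pos.2 (by positivity : 0 < 2 * s)))
  have h := ((tendsto_mul_exp_neg_sq_div_atTop hs).const_mul s).neg.sub
    (herfc.const_mul (s * √(π * s / 2)))
  rw [mul_zero, mul_zero, neg_zero, sub_zero] at h
  exact h.congr fun u ↦ by simp only [sqGaussPrimitive, Function.comp, id, mul_assoc]

theorem continuous_sqGaussPrimitive (hs : 0 < s) : Continuous (sqGaussPrimitive s) :=
  continuous_iff_continuousAt.2 fun u ↦ (hasDerivAt_sqGaussPrimitive hs u).continuousAt

theorem hasDerivAt_sqrt_sq_add_sq {a δ : ℝ} (h : δ ^ 2 + a ^ 2 ≠ 0) :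
    HasDerivAt (fun δ ↦ √(δ ^ 2 + a ^ 2)) (δ / √(δ ^ 2 + a ^ 2)) δ := by
  refine (((hasDerivAt_pow 2 δ).add_const _).sqrt h).congr_deriv ?_
  field_simp
  norm_num

theorem integral_Ioi_mul_sqrt_sq_add_sq_mul_exp (hs : 0 < s) {a : ℝ} (ha : 0 ≤ a) :
    ∫ δ in Ioi 0, δ * √(δ ^ 2 + a ^ 2) * exp (-δ ^ 2 / (2 * s)) =
      s * a + s * √(π * s / 2) * exp (a ^ 2 / (2 * s)) * erfc (a / √(2 * s)) := by
  set H : ℝ → ℝ := fun δ ↦ exp (a ^ 2 / (2 * s)) * sqGaussPrimitive s √(δ ^ 2 + a ^ 2)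
  have hderiv (δ : ℝ) (hδ : δ ∈ Ioi 0) :
      HasDerivAt H (δ * √(δ ^ 2 + a ^ 2) * exp (-δ ^ 2 / (2 * s))) δ := by
    have hpos : 0 < δ ^ 2 + a ^ 2 := by have : 0 < δ := hδ; positivity
    refine (((hasDerivAt_sqGaussPrimitive hs _).comp δ
      (hasDerivAt_sqrt_sq_add_sq hpos.ne')).const_mul _).congr_deriv ?_
    have hexp : exp (-(δ ^ 2 + a ^ 2) / (2 * s)) * exp (a ^ 2 / (2 * s)) =
        exp (-δ ^ 2 / (2 * s)) := by
      rw [← exp_add]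
      congr 1
      ring
    rw [← hexp]
    field_simp
    rw [sq_sqrt hpos.le]
  have hcont : Continuous H := by
    have := continuous_sqGaussPrimitive hs
    fun_prop
  have hlim : Tendsto H atTop (𝓝 0) := by
    have hw : Tendsto (fun δ : ℝ ↦ √(δ ^ 2 + a ^ 2)) atTop atTop :=
      tendsto_sqrt_atTop.comp (tendsto_atTop_add_const_right _ _ (tendsto_pow_atTop two_ne_zero))
    simpa using ((tendsto_sqGaussPrimitive_atTop hs).comp hw).const_mul (exp (a ^ 2 / (2 * s)))
  rw [integral_Ioi_of_hasDerivAt_of_nonneg hcont.continuousWithinAt hderiv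
    (fun δ (hδ : 0 < δ) ↦ by positivity) hlim]
  simp only [H, sqGaussPrimitive]
  rw [zero_pow two_ne_zero, zero_add, sqrt_sq ha]
  have hexp : exp (a ^ 2 / (2 * s)) * exp (-a ^ 2 / (2 * s)) = 1 := by
    rw [← exp_add, neg_div, add_neg_cancel, exp_zero]
  linear_combination (s * a) * hexp

theorem delta_integral_erfc (τ : ℝ) (hτ : τ ∈ Set.Ico (0 : ℝ) 1)
    (y : ℝ) (hy : 0 < y) :
    (1 / (2 * y)) *
        ∫ δ in Set.Ioi (0 : ℝ),
          δ * Real.sqrt (δ ^ 2 + 4 * y ^ 2) * Real.exp (-δ ^ 2 / (2 * (1 - τ ^ 2))) =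
      (1 - τ ^ 2) +
        Real.sqrt (Real.pi / 2) * (1 - τ ^ 2) ^ ((3 : ℝ) / 2) *
          Real.exp (2 * y ^ 2 / (1 - τ ^ 2)) * (1 / (2 * y)) *
          erfc (Real.sqrt (2 / (1 - τ ^ 2)) * y) := by
  have hs : 0 < 1 - τ ^ 2 := by nlinarith [hτ.1, hτ.2]
  generalize 1 - τ ^ 2 = s at hs ⊢
  simp_rw [show (4 : ℝ) * y ^ 2 = (2 * y) ^ 2 by ring]
  rw [integral_Ioi_mul_sqrt_sq_add_sq_mul_exp hs (by positivity)]
  have h32 : s ^ ((3 : ℝ) / 2) = s * √s := by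
    rw [sqrt_eq_rpow, ← rpow_one_add' hs.le (by norm_num)]
    norm_num
  have hpi : √(π * s / 2) = √(π / 2) * √s := by
    rw [← sqrt_mul (by positivity)]
    congr 1
    ring
  have harg : 2 * y / √(2 * s) = √(2 / s) * y := by
    have h2 : √2 * √2 = 2 := mul_self_sqrt zero_le_two
    rw [sqrt_mul zero_le_two, sqrt_div zero_le_two]
    field_simp
    linear_combination (-1 : ℝ) * h2
  rw [h32, hpi, harg, show (2 * y) ^ 2 / (2 * s) = 2 * y ^ 2 / s by field_simp]
  field_simp
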